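/- arXiv:2402.03004 — 2 statements merged into one kernel-verified Lean document; each statement's English description precedes it below -/
import Mathlib

section
/- Let J ≥ 1, let Σ₀ and Σ₁ be symmetric positive definite J×J real matrices, let δ ∈ ℝ^J, γ ∈ ℝ^J, and set Γ = diag(exp(−γ₁), …, exp(−γ_J)). For j = 1,…,J let h_j : ℝ → ℝ be differentiable with h'_j(y) > 0 for all y, and define h₀(y) = h(y) = (h₁(y₁),…,h_J(y_J))ᵀ and h₁(y) = Γ(h(y) − δ), with corresponding densities f_d(y) = φ_{0,Σ_d}(h_d(y)) · ∏_{j=1}^J h'_{dj}(y_j), where h'_{0j} = h'_j and h'_{1j} = exp(−γ_j) h'_j. Assume the symmetric matrix A = Γ Σ₁⁻¹ Γ − Σ₀⁻¹ is invertible and set β = (I + (Σ₀ A)⁻¹) δ. Then for every y ∈ ℝ^J, log(f₁(y)/f₀(y)) = −(1/2)·(h(y) − β)ᵀ A (h(y) − β) + c, where c = −(1/2)·( log(det Σ₁ / det Σ₀) − δᵀ Σ₀⁻¹ (I + (Σ₀ A)⁻¹) δ ) − ∑_{j=1}^J γ_j. -/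
/-!
Both densities carry the same Jacobian factor `∏ h'_j(y_j)` up to the constant `exp(-∑ γ_j)`,
so the log ratio is a difference of two Gaussian exponents plus constants. With `z = h(y)` and
`M = Γ Σ₁⁻¹ Γ = A + Σ₀⁻¹`, completing the square in
`(z - δ)ᵀ M (z - δ) - zᵀ Σ₀⁻¹ z` around `β = (1 + A⁻¹ Σ₀⁻¹) δ` gives the quadratic form in `A`,
since `A β = M δ`.
-/

open Matrix

noncomputable def mvnPdf {J : ℕ} (Sig : Matrix (Fin J) (Fin J) ℝ) (z : Fin J → ℝ) : ℝ :=
  (2 * Real.pi) ^ (-(J : ℝ) / 2) * Sig.det ^ (-(1 : ℝ) / 2) *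
    Real.exp (-(1 / 2 : ℝ) * (z ⬝ᵥ Sig⁻¹.mulVec z))

namespace Matrix

variable {n R : Type*} [Fintype n] [CommRing R]

lemma IsSymm.dotProduct_mulVec_comm {N : Matrix n n R} (hN : N.IsSymm) (u v : n → R) :
    u ⬝ᵥ N *ᵥ v = v ⬝ᵥ N *ᵥ u := by
  simpa only [hN.eq] using dotProduct_transpose_mulVec N u v

lemma mulVec_dotProduct_mulVec_mulVec (P S : Matrix n n R) (x : n → R) :
    P *ᵥ x ⬝ᵥ S *ᵥ (P *ᵥ x) = x ⬝ᵥ (Pᵀ * S * P) *ᵥ x := by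
  rw [dotProduct_comm, ← dotProduct_transpose_mulVec, mulVec_mulVec, mulVec_mulVec]

variable [DecidableEq n]

lemma quadratic_add_sub_quadratic_eq {A S : Matrix n n R} (hA : A.IsSymm) (hS : S.IsSymm)
    (hAdet : IsUnit A.det) (z δ : n → R) :
    (z - δ) ⬝ᵥ (A + S) *ᵥ (z - δ) - z ⬝ᵥ S *ᵥ z =
      (z - (1 + A⁻¹ * S) *ᵥ δ) ⬝ᵥ A *ᵥ (z - (1 + A⁻¹ * S) *ᵥ δ)
        - δ ⬝ᵥ (S * (1 + A⁻¹ * S)) *ᵥ δ := by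
  have hAAS : A * (A⁻¹ * S) = S := by rw [← Matrix.mul_assoc, mul_nonsing_inv A hAdet, one_mul]
  set β := (1 + A⁻¹ * S) *ᵥ δ
  have hAβ : A *ᵥ β = (A + S) *ᵥ δ := by rw [mulVec_mulVec, mul_add, mul_one, hAAS]
  have hβAβ : β ⬝ᵥ A *ᵥ β = δ ⬝ᵥ (A + S) *ᵥ δ + δ ⬝ᵥ (S * (1 + A⁻¹ * S)) *ᵥ δ := by
    have : (A + S) * (1 + A⁻¹ * S) = A + S + S * (1 + A⁻¹ * S) := by
      simp only [add_mul, mul_add, mul_one, hAAS]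
    rw [hAβ, (hA.add hS).dotProduct_mulVec_comm, mulVec_mulVec, this, add_mulVec, dotProduct_add]
  have hcross : z ⬝ᵥ A *ᵥ β = z ⬝ᵥ (A + S) *ᵥ δ := by rw [hAβ]
  have hzAz : z ⬝ᵥ (A + S) *ᵥ z = z ⬝ᵥ A *ᵥ z + z ⬝ᵥ S *ᵥ z := by
    rw [add_mulVec, dotProduct_add]
  simp only [mulVec_sub, dotProduct_sub, sub_dotProduct]
  rw [hA.dotProduct_mulVec_comm β z, (hA.add hS).dotProduct_mulVec_comm δ z]
  linear_combination hzAz - hβAβ + 2 * hcross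

end Matrix

lemma mvnPdf_eq_exp {J : ℕ} {Sig : Matrix (Fin J) (Fin J) ℝ} (hSig : Sig.PosDef) (z : Fin J → ℝ) :
    mvnPdf Sig z = (2 * Real.pi) ^ (-(J : ℝ) / 2) *
      Real.exp (-(1 / 2 : ℝ) * (Real.log Sig.det + z ⬝ᵥ Sig⁻¹ *ᵥ z)) := by
  rw [mvnPdf, Real.rpow_def_of_pos hSig.det_pos, mul_assoc, ← Real.exp_add]
  ring_nf

lemma mvnPdf_pos {J : ℕ} {Sig : Matrix (Fin J) (Fin J) ℝ} (hSig : Sig.PosDef) (z : Fin J → ℝ) :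
    0 < mvnPdf Sig z := by
  rw [mvnPdf_eq_exp hSig]
  positivity

lemma log_mvnPdf_div_mvnPdf {J : ℕ} {Sig0 Sig1 : Matrix (Fin J) (Fin J) ℝ}
    (hSig0 : Sig0.PosDef) (hSig1 : Sig1.PosDef) (u v : Fin J → ℝ) :
    Real.log (mvnPdf Sig1 u / mvnPdf Sig0 v) =
      -(1 / 2 : ℝ) * (Real.log (Sig1.det / Sig0.det) + u ⬝ᵥ Sig1⁻¹ *ᵥ u - v ⬝ᵥ Sig0⁻¹ *ᵥ v) := by
  rw [mvnPdf_eq_exp hSig0, mvnPdf_eq_exp hSig1, mul_div_mul_left _ _ (by positivity),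
    ← Real.exp_sub, Real.log_exp, Real.log_div hSig1.det_pos.ne' hSig0.det_pos.ne']
  ring

theorem stmt1_general {J : ℕ}
    (Sig0 Sig1 : Matrix (Fin J) (Fin J) ℝ)
    (hSig0 : Sig0.PosDef) (hSig1 : Sig1.PosDef)
    (δ γ : Fin J → ℝ)
    (Γ : Matrix (Fin J) (Fin J) ℝ)
    (hΓ : Γ = Matrix.diagonal fun j => Real.exp (-(γ j)))
    (h h' : Fin J → ℝ → ℝ)
    (hpos : ∀ j y, 0 < h' j y)
    (A : Matrix (Fin J) (Fin J) ℝ) (hAdef : A = Γ * Sig1⁻¹ * Γ - Sig0⁻¹)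
    (hAinv : IsUnit A.det)
    (β : Fin J → ℝ) (hβ : β = (1 + (Sig0 * A)⁻¹).mulVec δ)
    (f0 f1 : (Fin J → ℝ) → ℝ)
    (hf0 : ∀ y, f0 y = mvnPdf Sig0 (fun j => h j (y j)) * ∏ j, h' j (y j))
    (hf1 : ∀ y, f1 y =
      mvnPdf Sig1 (Γ.mulVec ((fun j => h j (y j)) - δ)) *
        ∏ j, Real.exp (-(γ j)) * h' j (y j))
    (c : ℝ)
    (hc : c = -(1 / 2 : ℝ) * (Real.log (Sig1.det / Sig0.det)
            - δ ⬝ᵥ (Sig0⁻¹ * (1 + (Sig0 * A)⁻¹)).mulVec δ) - ∑ j, γ j) :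
    ∀ y : Fin J → ℝ,
      Real.log (f1 y / f0 y) =
        -(1 / 2 : ℝ) *
            (((fun j => h j (y j)) - β) ⬝ᵥ A.mulVec ((fun j => h j (y j)) - β)) + c := by
  intro y
  set z : Fin J → ℝ := fun j => h j (y j)
  have hΓsymm : Γ.IsSymm := hΓ ▸ isSymm_diagonal _
  have hS0 : Sig0⁻¹.IsSymm := IsSymm.inv hSig0.isHermitian
  have hS1 : Sig1⁻¹.IsSymm := IsSymm.inv hSig1.isHermitian
  have hM : Γ * Sig1⁻¹ * Γ = A + Sig0⁻¹ := by rw [hAdef, sub_add_cancel]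
  have hA : A.IsSymm := by
    have hMsymm : (Γ * Sig1⁻¹ * Γ).IsSymm := by
      simp only [IsSymm, transpose_mul, hΓsymm.eq, hS1.eq, Matrix.mul_assoc]
    exact hAdef ▸ hMsymm.sub hS0
  have hratio : f1 y / f0 y =
      mvnPdf Sig1 (Γ *ᵥ (z - δ)) / mvnPdf Sig0 z * Real.exp (-∑ j, γ j) := by
    have hP : ∏ j, h' j (y j) ≠ 0 := (Finset.prod_pos fun j _ => hpos j (y j)).ne'
    rw [hf0, hf1, Finset.prod_mul_distrib, ← Real.exp_sum, ← Finset.sum_neg_distrib]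
    field_simp
    rfl
  rw [hratio, Real.log_mul (div_pos (mvnPdf_pos hSig1 _) (mvnPdf_pos hSig0 _)).ne'
      (Real.exp_pos _).ne', Real.log_exp, log_mvnPdf_div_mvnPdf hSig0 hSig1,
    mulVec_dotProduct_mulVec_mulVec, hΓsymm.eq, hM, add_sub_assoc,
    quadratic_add_sub_quadratic_eq hA hS0 hAinv, hc, hβ, Matrix.mul_inv_rev]
  ring

/-- Proposition 2, lsTDA log-likelihood ratio in quadratic form. -/
theorem stmt1 {J : ℕ} (hJ : 1 ≤ J)
    (Sig0 Sig1 : Matrix (Fin J) (Fin J) ℝ)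
    (hSig0 : Sig0.PosDef) (hSig1 : Sig1.PosDef)
    (δ γ : Fin J → ℝ)
    (Γ : Matrix (Fin J) (Fin J) ℝ)
    (hΓ : Γ = Matrix.diagonal fun j => Real.exp (-(γ j)))
    (h h' : Fin J → ℝ → ℝ)
    (hderiv : ∀ j y, HasDerivAt (h j) (h' j y) y)
    (hpos : ∀ j y, 0 < h' j y)
    (A : Matrix (Fin J) (Fin J) ℝ) (hAdef : A = Γ * Sig1⁻¹ * Γ - Sig0⁻¹)
    (hAsymm : A.IsSymm) (hAinv : IsUnit A.det)
    (β : Fin J → ℝ) (hβ : β = (1 + (Sig0 * A)⁻¹).mulVec δ)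
    (f0 f1 : (Fin J → ℝ) → ℝ)
    (hf0 : ∀ y, f0 y = mvnPdf Sig0 (fun j => h j (y j)) * ∏ j, h' j (y j))
    (hf1 : ∀ y, f1 y =
      mvnPdf Sig1 (Γ.mulVec ((fun j => h j (y j)) - δ)) *
        ∏ j, Real.exp (-(γ j)) * h' j (y j))
    (c : ℝ)
    (hc : c = -(1 / 2 : ℝ) * (Real.log (Sig1.det / Sig0.det)
            - δ ⬝ᵥ (Sig0⁻¹ * (1 + (Sig0 * A)⁻¹)).mulVec δ) - ∑ j, γ j) :
    ∀ y : Fin J → ℝ,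
      Real.log (f1 y / f0 y) =
        -(1 / 2 : ℝ) *
            (((fun j => h j (y j)) - β) ⬝ᵥ A.mulVec ((fun j => h j (y j)) - β)) + c :=
  stmt1_general Sig0 Sig1 hSig0 hSig1 δ γ Γ hΓ h h' hpos A hAdef hAinv β hβ f0 f1 hf0 hf1 c hc
end

section
/- Let δ ∈ ℝ with δ ≠ 0, let F(z) = 1/(1 + e^{−z}) denote the standard logistic cumulative distribution function and f(z) = e^{−z}/(1 + e^{−z})² its density. Then ∫_ℝ F(z) · f(z − δ) dz = exp(δ) · ( exp(δ) − 1 − δ ) / ( exp(δ) − 1 )². That is, if L₀ and L₁ are independent with standard logistic distributions shifted so that L₁ = L₀' + δ for an independent standard logistic L₀', then P(L₁ > L₀) = exp(δ)(exp(δ) − 1 − δ)/(exp(δ) − 1)². -/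
/-!
Write `σ` for the logistic function `Real.sigmoid`, so that the integrand is `σ z · σ'(z - δ)`
with `σ' = σ (1 - σ)`, and put `b = exp δ`. Since `(log σ)' = 1 - σ` and the odds `σ / (1 - σ)`
of `σ (z - δ)` are those of `σ z` divided by `b`,
`G z = b / (b - 1)² · (log σ z - log σ (z - δ)) + b / (b - 1) · σ (z - δ)` is an antiderivative.
It tends to `b / (b - 1)` at `+∞` and, because `σ z / σ (z - δ) → b`, to `b δ / (b - 1)²` at `-∞`.
The integrand is nonnegative, hence integrable, and its integral is the difference of these limits.
-/

open MeasureTheory Real Filter Set Topology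

theorem integrable_deriv_of_nonneg_of_tendsto {g g' : ℝ → ℝ} {m n : ℝ}
    (hderiv : ∀ x, HasDerivAt g (g' x) x) (hg' : ∀ x, 0 ≤ g' x)
    (hbot : Tendsto g atBot (𝓝 m)) (htop : Tendsto g atTop (𝓝 n)) : Integrable g' := by
  have hIoc (a b : ℝ) : IntegrableOn g' (Ioc a b) :=
    intervalIntegral.integrableOn_deriv_of_nonneg
      (fun x _ => (hderiv x).continuousAt.continuousWithinAt) (fun x _ => hderiv x)
      (fun x _ => hg' x)
  refine integrable_of_intervalIntegral_norm_tendsto (n - m) (fun i => hIoc (-i) i)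
    tendsto_neg_atTop_atBot tendsto_id ?_
  refine (htop.sub (hbot.comp tendsto_neg_atTop_atBot)).congr fun i => ?_
  simp only [Real.norm_of_nonneg (hg' _)]
  exact (intervalIntegral.integral_eq_sub_of_hasDerivAt (fun x _ => hderiv x)
    ⟨hIoc _ _, hIoc _ _⟩).symm

theorem integral_of_hasDerivAt_of_nonneg_of_tendsto {g g' : ℝ → ℝ} {m n : ℝ}
    (hderiv : ∀ x, HasDerivAt g (g' x) x) (hg' : ∀ x, 0 ≤ g' x)
    (hbot : Tendsto g atBot (𝓝 m)) (htop : Tendsto g atTop (𝓝 n)) : ∫ x, g' x = n - m :=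
  integral_of_hasDerivAt_of_tendsto hderiv
    (integrable_deriv_of_nonneg_of_tendsto hderiv hg' hbot htop) hbot htop

namespace Real

theorem hasDerivAt_log_sigmoid (x : ℝ) :
    HasDerivAt (fun x => log (sigmoid x)) (1 - sigmoid x) x := by
  convert (hasDerivAt_sigmoid x).log (sigmoid_pos x).ne' using 1
  field_simp [(sigmoid_pos x).ne']

theorem one_div_one_add_exp_neg (x : ℝ) : 1 / (1 + exp (-x)) = sigmoid x := by
  rw [one_div, sigmoid_def]

theorem exp_neg_div_one_add_exp_neg_sq (x : ℝ) :
    exp (-x) / (1 + exp (-x)) ^ 2 = sigmoid x * (1 - sigmoid x) := by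
  rw [← sigmoid_neg, ← sigmoid_mul_rexp_neg x, sigmoid_def]
  field

/-- Shifting the argument by `δ` divides the odds `σ / (1 - σ) = exp x` by `exp δ`. -/
theorem exp_mul_sigmoid_sub_mul_one_sub_sigmoid (x δ : ℝ) :
    exp δ * sigmoid (x - δ) * (1 - sigmoid x) = sigmoid x * (1 - sigmoid (x - δ)) := by
  have hexp : exp (-(x - δ)) = exp δ * exp (-x) := by rw [← exp_add]; ring_nf
  simp only [sigmoid_def, hexp]
  field

theorem tendsto_sigmoid_div_sigmoid_sub_atBot (δ : ℝ) :
    Tendsto (fun x => sigmoid x / sigmoid (x - δ)) atBot (𝓝 (exp δ)) := by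
  have h1 : Tendsto (fun x => sigmoid x) atBot (𝓝 0) := tendsto_sigmoid_atBot
  have h2 : Tendsto (fun x => sigmoid (x - δ)) atBot (𝓝 0) :=
    tendsto_sigmoid_atBot.comp (tendsto_atBot_add_const_right _ _ tendsto_id)
  have := ((tendsto_const_nhds (x := exp δ)).mul ((tendsto_const_nhds (x := (1 : ℝ))).sub h1)).div
    ((tendsto_const_nhds (x := (1 : ℝ))).sub h2) (by norm_num)
  simp only [sub_zero, mul_one, div_one] at this
  refine this.congr fun x => ?_
  rw [Pi.div_apply, div_eq_div_iff (sub_ne_zero.2 (sigmoid_lt_one _).ne') (sigmoid_pos _).ne']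
  linear_combination exp_mul_sigmoid_sub_mul_one_sub_sigmoid x δ

noncomputable def logisticAUCPrimitive (δ z : ℝ) : ℝ :=
  exp δ / (exp δ - 1) ^ 2 * (log (sigmoid z) - log (sigmoid (z - δ)))
    + exp δ / (exp δ - 1) * sigmoid (z - δ)

theorem hasDerivAt_logisticAUCPrimitive {δ : ℝ} (hδ : δ ≠ 0) (z : ℝ) :
    HasDerivAt (logisticAUCPrimitive δ)
      (sigmoid z * (sigmoid (z - δ) * (1 - sigmoid (z - δ)))) z := by
  have hb : exp δ - 1 ≠ 0 := by rwa [Ne, sub_eq_zero, exp_eq_one_iff]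
  have hlog := (hasDerivAt_log_sigmoid z).sub ((hasDerivAt_log_sigmoid (z - δ)).comp_sub_const z δ)
  have hsig := (hasDerivAt_sigmoid (z - δ)).comp_sub_const z δ
  refine ((hlog.const_mul (exp δ / (exp δ - 1) ^ 2)).add
    (hsig.const_mul (exp δ / (exp δ - 1)))).congr_deriv ?_
  field_simp
  linear_combination (exp δ - (exp δ - 1) * sigmoid (z - δ)) *
    exp_mul_sigmoid_sub_mul_one_sub_sigmoid z δ

theorem tendsto_logisticAUCPrimitive_atTop (δ : ℝ) :
    Tendsto (logisticAUCPrimitive δ) atTop (𝓝 (exp δ / (exp δ - 1))) := by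
  have hshift : Tendsto (fun z => sigmoid (z - δ)) atTop (𝓝 1) :=
    tendsto_sigmoid_atTop.comp (tendsto_atTop_add_const_right _ _ tendsto_id)
  have := ((tendsto_sigmoid_atTop.log one_ne_zero).sub (hshift.log one_ne_zero)).const_mul
    (exp δ / (exp δ - 1) ^ 2) |>.add (hshift.const_mul (exp δ / (exp δ - 1)))
  simp only [log_one, sub_self, mul_zero, mul_one, zero_add] at this
  exact this

theorem tendsto_logisticAUCPrimitive_atBot (δ : ℝ) :
    Tendsto (logisticAUCPrimitive δ) atBot (𝓝 (exp δ / (exp δ - 1) ^ 2 * δ)) := by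
  have hshift : Tendsto (fun z => sigmoid (z - δ)) atBot (𝓝 0) :=
    tendsto_sigmoid_atBot.comp (tendsto_atBot_add_const_right _ _ tendsto_id)
  have hlog := (tendsto_sigmoid_div_sigmoid_sub_atBot δ).log (exp_pos δ).ne'
  rw [log_exp] at hlog
  have := (hlog.const_mul (exp δ / (exp δ - 1) ^ 2)).add (hshift.const_mul (exp δ / (exp δ - 1)))
  simp only [mul_zero, add_zero] at this
  refine this.congr fun z => ?_
  rw [logisticAUCPrimitive, log_div (sigmoid_pos _).ne' (sigmoid_pos _).ne']

end Real

/-- closed-form AUC for the logistic location-shift model: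
with `F` the standard logistic CDF and `f` its density,
`∫ F(z) f(z − δ) dz = e^δ (e^δ − 1 − δ) / (e^δ − 1)²`. -/
theorem stmt15 (δ : ℝ) (hδ : δ ≠ 0) :
    (∫ z : ℝ,
        (1 / (1 + Real.exp (-z))) *
          (Real.exp (-(z - δ)) / (1 + Real.exp (-(z - δ))) ^ 2))
      = Real.exp δ * (Real.exp δ - 1 - δ) / (Real.exp δ - 1) ^ 2 := by
  have hb : exp δ - 1 ≠ 0 := by rwa [Ne, sub_eq_zero, exp_eq_one_iff]
  simp only [one_div_one_add_exp_neg, exp_neg_div_one_add_exp_neg_sq]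
  rw [integral_of_hasDerivAt_of_nonneg_of_tendsto (hasDerivAt_logisticAUCPrimitive hδ)
    (fun z => mul_nonneg (sigmoid_nonneg _) (mul_nonneg (sigmoid_nonneg _)
      (sub_nonneg.2 (sigmoid_le_one _))))
    (tendsto_logisticAUCPrimitive_atBot δ) (tendsto_logisticAUCPrimitive_atTop δ)]
  field_simp
end
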